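/- arXiv:1007.1119 — 6 statements merged into one kernel-verified Lean document; each statement's English description precedes it below -/
import Mathlib

section
/- Let g = ⊕_{λ∈Λ} W_λ be a finite-dimensional real Lie algebra graded over a finite set Λ ⊆ [1,∞) of weights, i.e. [W_λ, W_μ] ⊆ W_{λ+μ} (with W_ν = 0 for ν ∉ Λ). Then every term of the descending central series satisfies g_[s] ⊆ ⊕_{λ ≥ s} W_λ for each integer s ≥ 1. Consequently, if g is n-step nilpotent, then Σ_{s=1}^n dim g_[s] ≤ Σ_{λ∈Λ} λ · dim W_λ, i.e. the degree of polynomial growth Q_G is at most the homogeneous dimension Q_δ. -/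
/-!
The weights give a decreasing filtration `F r = ⊕_{λ ≥ r} W_λ` of `g` with `F 1 = g` and
`[F r, F r'] ⊆ F (r + r')`, so induction gives `g_[s] ⊆ F s`. Then
`dim g_[s] ≤ Σ_{λ ≥ s} dim W_λ`, and summing over `s = 1, …, n` counts each `dim W_λ` at most
`⌊λ⌋ ≤ λ` times.
-/

open Finset

section WeightFiltration

variable {R M : Type*} [Semiring R] [AddCommMonoid M] [Module R M]

def weightFiltration (W : ℝ → Submodule R M) (r : ℝ) : Submodule R M :=
  ⨆ l, ⨆ _ : r ≤ l, W l

variable {W : ℝ → Submodule R M}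

theorem le_weightFiltration {r l : ℝ} (h : r ≤ l) : W l ≤ weightFiltration W r :=
  le_iSup₂_of_le l h le_rfl

theorem biSup_mem_le_eq_weightFiltration {Λ : Finset ℝ} (hW0 : ∀ l, l ∉ Λ → W l = ⊥) (r : ℝ) :
    ⨆ l ∈ Λ, ⨆ _ : r ≤ l, W l = weightFiltration W r := by
  refine le_antisymm (iSup₂_le fun l _ => iSup_le fun h => le_weightFiltration h)
    (iSup₂_le fun l h => ?_)
  by_cases hl : l ∈ Λ
  · exact le_iSup₂_of_le l hl (le_iSup_of_le h le_rfl)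
  · simp [hW0 l hl]

theorem weightFiltration_eq_finsetSup {Λ : Finset ℝ} (hW0 : ∀ l, l ∉ Λ → W l = ⊥) (r : ℝ) :
    weightFiltration W r = {l ∈ Λ | r ≤ l}.sup W := by
  rw [← biSup_mem_le_eq_weightFiltration hW0, Finset.sup_eq_iSup]
  simp only [Finset.mem_filter, iSup_and]

theorem weightFiltration_eq_top {ι : Type*} {w : ι → ℝ} {r : ℝ} (hr : ∀ i, r ≤ w i)
    (htop : ⨆ i, W (w i) = ⊤) : weightFiltration W r = ⊤ :=
  top_unique <| htop ▸ iSup_le fun i => le_weightFiltration (hr i)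

end WeightFiltration

section LieAlgebra

variable {R L : Type*} [CommRing R] [LieRing L] [LieAlgebra R L] {W : ℝ → Submodule R L}

theorem lie_mem_weightFiltration
    (hbr : ∀ (l m : ℝ) (x y : L), x ∈ W l → y ∈ W m → ⁅x, y⁆ ∈ W (l + m))
    {r r' : ℝ} {x y : L} (hx : x ∈ weightFiltration W r) (hy : y ∈ weightFiltration W r') :
    ⁅x, y⁆ ∈ weightFiltration W (r + r') := by
  let bracket : L →ₗ[R] L →ₗ[R] L := LinearMap.mk₂ R (⁅·, ·⁆) add_lie smul_lie lie_add lie_smul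
  have hle : Submodule.map₂ bracket (weightFiltration W r) (weightFiltration W r') ≤
      weightFiltration W (r + r') := by
    rw [weightFiltration, weightFiltration]
    simp only [Submodule.map₂_iSup_left, Submodule.map₂_iSup_right, iSup_le_iff]
    intro m hm l hl
    exact (Submodule.map₂_le.2 fun x hx y hy => hbr l m x y hx hy).trans
      (le_weightFiltration (add_le_add hl hm))
  exact hle (Submodule.apply_mem_map₂ bracket hx hy)

theorem lowerCentralSeries_le_weightFiltration
    (hbr : ∀ (l m : ℝ) (x y : L), x ∈ W l → y ∈ W m → ⁅x, y⁆ ∈ W (l + m))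
    (htop : weightFiltration W 1 = ⊤) (k : ℕ) :
    (LieModule.lowerCentralSeries R L L k).toSubmodule ≤ weightFiltration W (k + 1) := by
  induction k with
  | zero => simp [htop]
  | succ k ih =>
    rw [LieModule.lowerCentralSeries_succ, LieSubmodule.lieIdeal_oper_eq_linear_span',
      Submodule.span_le]
    rintro _ ⟨x, -, y, hy, rfl⟩
    have hx : x ∈ weightFiltration W 1 := htop ▸ Submodule.mem_top
    simpa [add_comm] using lie_mem_weightFiltration hbr hx (ih hy)

end LieAlgebra

section Dimension

variable {K V : Type*} [Field K] [AddCommGroup V] [Module K V] [FiniteDimensional K V]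

theorem finrank_finsetSup_le_sum {ι : Type*} (t : Finset ι) (W : ι → Submodule K V) :
    Module.finrank K ↥(t.sup W) ≤ ∑ i ∈ t, Module.finrank K (W i) := by
  classical
  induction t using Finset.induction_on with
  | empty => simp
  | insert a t ha ih =>
    rw [Finset.sup_insert, Finset.sum_insert ha]
    exact (Submodule.finrank_add_le_finrank_add_finrank _ _).trans (by omega)

theorem finrank_weightFiltration_le {W : ℝ → Submodule K V} {Λ : Finset ℝ}
    (hW0 : ∀ l, l ∉ Λ → W l = ⊥) (r : ℝ) :
    Module.finrank K (weightFiltration W r) ≤ ∑ l ∈ Λ with r ≤ l, Module.finrank K (W l) :=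
  weightFiltration_eq_finsetSup hW0 r ▸ finrank_finsetSup_le_sum _ W

end Dimension

theorem card_filter_Icc_natCast_le (n : ℕ) {l : ℝ} (hl : 0 ≤ l) :
    (#({s ∈ Icc 1 n | (s : ℝ) ≤ l} : Finset ℕ) : ℝ) ≤ l := by
  have hsub : ({s ∈ Icc 1 n | (s : ℝ) ≤ l} : Finset ℕ) ⊆ Icc (1 : ℕ) ⌊l⌋₊ := fun s hs => by
    simp only [Finset.mem_filter, Finset.mem_Icc] at hs ⊢
    exact ⟨hs.1.1, Nat.le_floor hs.2⟩
  calc (#({s ∈ Icc 1 n | (s : ℝ) ≤ l} : Finset ℕ) : ℝ) ≤ #(Icc (1 : ℕ) ⌊l⌋₊) := by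
        exact_mod_cast Finset.card_le_card hsub
    _ = ⌊l⌋₊ := by simp
    _ ≤ l := Nat.floor_le hl

theorem sum_Icc_sum_filter_le_sum_mul (n : ℕ) (Λ : Finset ℝ) (hΛ : ∀ l ∈ Λ, 0 ≤ l)
    (d : ℝ → ℝ) (hd : ∀ l ∈ Λ, 0 ≤ d l) :
    ∑ s ∈ Icc (1 : ℕ) n, ∑ l ∈ Λ with (s : ℝ) ≤ l, d l ≤ ∑ l ∈ Λ, l * d l := by
  simp only [Finset.sum_filter]
  rw [Finset.sum_comm]
  refine Finset.sum_le_sum fun l hl => ?_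
  rw [← Finset.sum_filter, Finset.sum_const, nsmul_eq_mul]
  exact mul_le_mul_of_nonneg_right (card_filter_Icc_natCast_le n (hΛ l hl)) (hd l hl)

/-- For a finite-dimensional real Lie algebra graded over a finite set `Λ ⊆ [1,∞)` of weights,
every term of the descending central series `g_[s]` (for `s ≥ 1`, which in Mathlib numbering is
`lowerCentralSeries (s-1)`) is contained in `⊕_{λ ≥ s} W_λ`; consequently, if `g` is `n`-step
nilpotent then `Σ_{s=1}^n dim g_[s] ≤ Σ_{λ ∈ Λ} λ · dim W_λ`, i.e. `Q_G ≤ Q_δ`. -/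
theorem graded_lie_algebra_lcs_le_and_growth_le_homogeneous_dim
    (L : Type*) [LieRing L] [LieAlgebra ℝ L] [FiniteDimensional ℝ L]
    (Λ : Finset ℝ) (hΛ : ∀ l ∈ Λ, (1 : ℝ) ≤ l)
    (W : ℝ → Submodule ℝ L)
    (hW0 : ∀ l : ℝ, l ∉ Λ → W l = ⊥)
    (hdirect : DirectSum.IsInternal (fun l : {x // x ∈ Λ} => W l.1))
    (hbr : ∀ (l m : ℝ) (x y : L), x ∈ W l → y ∈ W m → ⁅x, y⁆ ∈ W (l + m)) :
    (∀ s : ℕ, 1 ≤ s →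
      (LieModule.lowerCentralSeries ℝ L L (s - 1)).toSubmodule ≤
        ⨆ l ∈ Λ, ⨆ _ : (s : ℝ) ≤ l, W l) ∧
    ∀ n : ℕ, LieModule.lowerCentralSeries ℝ L L n = ⊥ →
      ∑ s ∈ Finset.Icc 1 n,
          ((Module.finrank ℝ (LieModule.lowerCentralSeries ℝ L L (s - 1)).toSubmodule : ℝ)) ≤
        ∑ l ∈ Λ, l * (Module.finrank ℝ (W l) : ℝ) := by
  have htop : weightFiltration W 1 = ⊤ :=
    weightFiltration_eq_top (fun l : Λ => hΛ l.1 l.2) hdirect.submodule_iSup_eq_top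
  have hlcs (s : ℕ) (hs : 1 ≤ s) :
      (LieModule.lowerCentralSeries ℝ L L (s - 1)).toSubmodule ≤ weightFiltration W s := by
    simpa [Nat.cast_sub hs] using lowerCentralSeries_le_weightFiltration hbr htop (s - 1)
  refine ⟨fun s hs => biSup_mem_le_eq_weightFiltration hW0 s ▸ hlcs s hs, fun n _ => ?_⟩
  calc ∑ s ∈ Icc 1 n,
        ((Module.finrank ℝ (LieModule.lowerCentralSeries ℝ L L (s - 1)).toSubmodule : ℝ))
      ≤ ∑ s ∈ Icc 1 n, ∑ l ∈ Λ with (s : ℝ) ≤ l, (Module.finrank ℝ (W l) : ℝ) := by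
        refine Finset.sum_le_sum fun s hs => ?_
        exact_mod_cast (Submodule.finrank_mono (hlcs s (Finset.mem_Icc.1 hs).1)).trans
          (finrank_weightFiltration_le hW0 s)
    _ ≤ ∑ l ∈ Λ, l * (Module.finrank ℝ (W l) : ℝ) :=
        sum_Icc_sum_filter_le_sum_mul n Λ (fun l hl => zero_le_one.trans (hΛ l hl)) _
          (fun _ _ => Nat.cast_nonneg _)
end

section
/- Let σ be a regular Borel measure on ℝ^n satisfying σ(δ_t(A)) = t^Q σ(A) for all t > 0 and all Borel sets A, for some Q > 0, where δ_t are dilations with exponents λ_j ≥ 1. Let |·|_δ be a homogeneous norm and S = {λ ∈ ℝ^n : |λ|_δ = 1}. Then S is compact and there exists a regular Borel measure τ on S such that ∫_{ℝ^n} f dσ = ∫_S ∫_0^∞ f(δ_t(ω)) t^{Q−1} dt dτ(ω) for every Borel function f : ℝ^n → [0,∞]. -/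
/-!
Off the origin, `x ↦ (δ_{1/N x} x, N x)` splits `x` into a point of the sphere `{N = 1}` and a
radius. For the sector `A_b(E) = {x | 0 < N x ≤ b, δ_{1/N x} x ∈ E}` one has `A_b(E) = δ_b A_1(E)`,
so homogeneity gives `σ (A_b(E)) = b ^ Q σ (A_1(E))`, which is also the mass that
`τ ⊗ t ^ (Q - 1) dt` gives to `E × (-∞, b]` when `τ E = Q σ (A_1(E))`. Rectangles of this kind
determine a product measure, and the origin is `σ`-null because `σ {0} = 2 ^ Q σ {0}`.
-/

open MeasureTheory Set Metric
open scoped ENNReal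

namespace HomogeneousPolar

variable {ι : Type*} {lam : ι → ℝ}

noncomputable def dilate (lam : ι → ℝ) (t : ℝ) (x : ι → ℝ) : ι → ℝ :=
  fun i => t ^ lam i * x i

lemma dilate_dilate {s t : ℝ} (hs : 0 ≤ s) (ht : 0 ≤ t) (x : ι → ℝ) :
    dilate lam s (dilate lam t x) = dilate lam (s * t) x := by
  funext i
  simp only [dilate, Real.mul_rpow hs ht]
  ring

@[simp]
lemma dilate_one (x : ι → ℝ) : dilate lam 1 x = x := by
  funext i
  simp [dilate]

lemma dilate_inv_dilate {t : ℝ} (ht : 0 < t) (x : ι → ℝ) :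
    dilate lam t⁻¹ (dilate lam t x) = x := by
  rw [dilate_dilate (inv_nonneg.2 ht.le) ht.le, inv_mul_cancel₀ ht.ne', dilate_one]

lemma dilate_dilate_inv {t : ℝ} (ht : 0 < t) (x : ι → ℝ) :
    dilate lam t (dilate lam t⁻¹ x) = x := by
  simpa using dilate_inv_dilate (lam := lam) (inv_pos.2 ht) x

@[simp]
lemma dilate_zero_right (t : ℝ) : dilate lam t 0 = 0 := by
  funext i
  simp [dilate]

lemma dilate_zero_left (hlam : ∀ i, lam i ≠ 0) (x : ι → ℝ) : dilate lam 0 x = 0 := by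
  funext i
  simp [dilate, Real.zero_rpow (hlam i)]

lemma image_dilate {t : ℝ} (ht : 0 < t) (A : Set (ι → ℝ)) :
    dilate lam t '' A = dilate lam t⁻¹ ⁻¹' A :=
  congrFun (image_eq_preimage_of_inverse (dilate_inv_dilate ht) (dilate_dilate_inv ht)) A

lemma measurable_dilate_uncurry (lam : ι → ℝ) :
    Measurable fun p : (ι → ℝ) × ℝ => dilate lam p.2 p.1 :=
  measurable_pi_lambda _ fun i =>
    (measurable_snd.pow measurable_const).mul ((measurable_pi_apply i).comp measurable_fst)

lemma continuous_dilate_uncurry (hlam : ∀ i, 0 ≤ lam i) :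
    Continuous fun p : (ι → ℝ) × ℝ => dilate lam p.2 p.1 :=
  continuous_pi fun i =>
    ((Real.continuous_rpow_const (hlam i)).comp continuous_snd).mul
      ((continuous_apply i).comp continuous_fst)

def IsHomogeneous (lam : ι → ℝ) (N : (ι → ℝ) → ℝ) : Prop :=
  ∀ t, 0 < t → ∀ x, N (dilate lam t x) = t * N x

def IsHomogeneousMeasure (lam : ι → ℝ) (Q : ℝ) (σ : Measure (ι → ℝ)) : Prop :=
  ∀ t, 0 < t → ∀ A, MeasurableSet A → σ (dilate lam t '' A) = ENNReal.ofReal (t ^ Q) * σ A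

variable {N : (ι → ℝ) → ℝ}

section Compactness

variable [Fintype ι]

lemma exists_norm_dilate_eq_one (hlam : ∀ i, 0 < lam i) {x : ι → ℝ} (hx : 1 ≤ ‖x‖) :
    ∃ s ∈ Ioc (0 : ℝ) 1, ‖dilate lam s x‖ = 1 := by
  have hzero : ‖dilate lam 0 x‖ = 0 := by simp [dilate_zero_left fun i => (hlam i).ne']
  have hcont : ContinuousOn (fun s => ‖dilate lam s x‖) (Icc 0 1) :=
    ((continuous_dilate_uncurry fun i => (hlam i).le).comp
      (continuous_const.prodMk continuous_id)).norm.continuousOn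
  obtain ⟨s, hs, hs1⟩ := intermediate_value_Icc zero_le_one hcont
    (show (1 : ℝ) ∈ Icc _ _ by simpa [hzero] using hx)
  refine ⟨s, ⟨hs.1.lt_of_ne ?_, hs.2⟩, hs1⟩
  rintro rfl
  simp [hzero] at hs1

/- A point outside the unit ball of `‖·‖` is `δ_r u` with `‖u‖ = 1` and `r ≤ 1 / c`, where
`c > 0` is the minimum of `N` on the sphere `‖u‖ = 1`. -/
theorem isCompact_setOf_le_one (hlam : ∀ i, 0 < lam i) (hNc : Continuous N)
    (hpos : ∀ x, x ≠ 0 → 0 < N x) (hNh : IsHomogeneous lam N) :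
    IsCompact {x | N x ≤ 1} := by
  obtain ⟨c, hc, hcN⟩ := (isCompact_sphere (0 : ι → ℝ) 1).exists_forall_le'
    hNc.continuousOn fun u hu => hpos u (ne_of_mem_sphere hu one_ne_zero)
  have hK : IsCompact (closedBall 0 1 ∪
      (fun p : (ι → ℝ) × ℝ => dilate lam p.2 p.1) '' (sphere 0 1 ×ˢ Icc 0 c⁻¹)) :=
    (isCompact_closedBall 0 1).union <| ((isCompact_sphere 0 1).prod isCompact_Icc).image
      (continuous_dilate_uncurry fun i => (hlam i).le)
  refine hK.of_isClosed_subset (isClosed_le hNc continuous_const) fun x (hx : N x ≤ 1) => ?_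
  rcases le_or_gt ‖x‖ 1 with hx1 | hx1
  · exact Or.inl (mem_closedBall_zero_iff.2 hx1)
  obtain ⟨s, hs, hs1⟩ := exists_norm_dilate_eq_one hlam hx1.le
  have hcs : c ≤ s := calc
    c ≤ N (dilate lam s x) := hcN _ (mem_sphere_zero_iff_norm.2 hs1)
    _ = s * N x := hNh s hs.1 x
    _ ≤ s := mul_le_of_le_one_right hs.1.le hx
  exact Or.inr ⟨(dilate lam s x, s⁻¹), ⟨mem_sphere_zero_iff_norm.2 hs1, inv_nonneg.2 hs.1.le,
    inv_anti₀ hc hcs⟩, dilate_inv_dilate hs.1 x⟩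

end Compactness

noncomputable def sphereProj (lam : ι → ℝ) (N : (ι → ℝ) → ℝ) (x : ι → ℝ) : ι → ℝ :=
  dilate lam (N x)⁻¹ x

lemma measurable_sphereProj (lam : ι → ℝ) (hN : Measurable N) : Measurable (sphereProj lam N) :=
  (measurable_dilate_uncurry lam).comp (measurable_id.prodMk hN.inv)

lemma apply_sphereProj (hNh : IsHomogeneous lam N) {x : ι → ℝ} (hx : 0 < N x) :
    N (sphereProj lam N x) = 1 := by
  rw [sphereProj, hNh _ (inv_pos.2 hx), inv_mul_cancel₀ hx.ne']

lemma sphereProj_dilate (hNh : IsHomogeneous lam N) {t : ℝ} (ht : 0 < t) {x : ι → ℝ}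
    (hx : 0 < N x) : sphereProj lam N (dilate lam t x) = sphereProj lam N x := by
  rw [sphereProj, sphereProj, hNh t ht, dilate_dilate (inv_nonneg.2 (mul_pos ht hx).le) ht.le,
    mul_inv_rev, inv_mul_cancel_right₀ ht.ne']

lemma dilate_sphereProj {x : ι → ℝ} (hx : 0 < N x) : dilate lam (N x) (sphereProj lam N x) = x :=
  dilate_dilate_inv hx x

lemma image_dilate_sector (hNh : IsHomogeneous lam N) (E : Set (ι → ℝ)) {b : ℝ} (hb : 0 < b) :
    dilate lam b '' (sphereProj lam N ⁻¹' E ∩ N ⁻¹' Ioc 0 1) =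
      sphereProj lam N ⁻¹' E ∩ N ⁻¹' Ioc 0 b := by
  ext x
  rw [image_dilate hb]
  simp only [mem_preimage, mem_inter_iff, mem_Ioc, hNh _ (inv_pos.2 hb), inv_mul_le_one₀ hb]
  constructor
  · rintro ⟨hE, hpos, hle⟩
    have hx : 0 < N x := pos_of_mul_pos_right hpos (inv_nonneg.2 hb.le)
    exact ⟨by rwa [sphereProj_dilate hNh (inv_pos.2 hb) hx] at hE, hx, hle⟩
  · rintro ⟨hE, hx, hle⟩
    exact ⟨by rwa [sphereProj_dilate hNh (inv_pos.2 hb) hx], mul_pos (inv_pos.2 hb) hx, hle⟩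

noncomputable def radialMeasure (Q : ℝ) : Measure ℝ :=
  (volume.restrict (Ioi 0)).withDensity fun t => ENNReal.ofReal (t ^ (Q - 1))

variable {Q : ℝ}

lemma radialMeasure_Iic (hQ : 0 < Q) {b : ℝ} (hb : 0 ≤ b) :
    radialMeasure Q (Iic b) = ENNReal.ofReal (b ^ Q / Q) := by
  rw [radialMeasure, withDensity_apply _ measurableSet_Iic, Measure.restrict_restrict
    measurableSet_Iic, Iic_inter_Ioi, ← ofReal_integral_eq_lintegral_ofReal
    (intervalIntegral.intervalIntegrable_rpow' (by linarith)).1,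
    ← intervalIntegral.integral_of_le hb, integral_rpow (Or.inl (by linarith)), sub_add_cancel,
    Real.zero_rpow hQ.ne', sub_zero]
  filter_upwards [ae_restrict_mem measurableSet_Ioc] with t ht
  exact Real.rpow_nonneg ht.1.le _

lemma radialMeasure_Iic_of_nonpos {b : ℝ} (hb : b ≤ 0) : radialMeasure Q (Iic b) = 0 := by
  rw [radialMeasure, withDensity_apply _ measurableSet_Iic, Measure.restrict_restrict
    measurableSet_Iic, Iic_inter_Ioi, Ioc_eq_empty (not_lt.2 hb), Measure.restrict_empty,
    lintegral_zero_measure]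

noncomputable def finiteSpanningSetsIn_radialMeasure_Iic (hQ : 0 < Q) :
    (radialMeasure Q).FiniteSpanningSetsIn (range Iic) where
  set k := Iic (k : ℕ)
  set_mem _ := mem_range_self _
  finite k := by
    rw [radialMeasure_Iic hQ k.cast_nonneg]
    exact ENNReal.ofReal_lt_top
  spanning := iUnion_eq_univ_iff.2 fun x => ⟨⌈x⌉₊, Nat.le_ceil x⟩

instance : SFinite (radialMeasure Q) := by
  unfold radialMeasure
  infer_instance

lemma lintegral_radialMeasure {g : ℝ → ℝ≥0∞} (hg : Measurable g) :
    ∫⁻ t, g t ∂radialMeasure Q = ∫⁻ t in Ioi 0, g t * ENNReal.ofReal (t ^ (Q - 1)) := by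
  rw [radialMeasure, lintegral_withDensity_eq_lintegral_mul _ (by fun_prop) hg]
  simp only [Pi.mul_apply, mul_comm]

/-- The paper's `τ`, as a measure on the ambient space carried by `{N = 1}`. -/
noncomputable def sphereMeasure (σ : Measure (ι → ℝ)) (lam : ι → ℝ) (N : (ι → ℝ) → ℝ) (Q : ℝ) :
    Measure (ι → ℝ) :=
  ENNReal.ofReal Q • (σ.restrict (N ⁻¹' Ioc 0 1)).map (sphereProj lam N)

variable {σ : Measure (ι → ℝ)}

lemma sphereMeasure_apply (hN : Measurable N) {E : Set (ι → ℝ)} (hE : MeasurableSet E) :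
    sphereMeasure σ lam N Q E =
      ENNReal.ofReal Q * σ (sphereProj lam N ⁻¹' E ∩ N ⁻¹' Ioc 0 1) := by
  rw [sphereMeasure, Measure.smul_apply, smul_eq_mul,
    Measure.map_apply (measurable_sphereProj lam hN) hE,
    Measure.restrict_apply (measurable_sphereProj lam hN hE)]

lemma isFiniteMeasure_sphereMeasure (hfin : σ (N ⁻¹' Ioc 0 1) ≠ ∞) :
    IsFiniteMeasure (sphereMeasure σ lam N Q) := by
  have := isFiniteMeasure_restrict.2 hfin
  exact Measure.smul_finite _ ENNReal.ofReal_ne_top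

lemma ae_sphereMeasure (hN : Measurable N) (hNh : IsHomogeneous lam N) :
    ∀ᵐ x ∂sphereMeasure σ lam N Q, N x = 1 := by
  refine Measure.ae_smul_measure ?_ _
  refine (ae_map_iff (measurable_sphereProj lam hN).aemeasurable
    (hN (measurableSet_singleton 1) : MeasurableSet {x | N x = 1})).2 ?_
  filter_upwards [ae_restrict_mem (hN measurableSet_Ioc)] with x hx using apply_sphereProj hNh hx.1

theorem map_restrict_pos_eq_prod (hQ : 0 < Q) (hN : Measurable N) (hNh : IsHomogeneous lam N)
    (hσ : IsHomogeneousMeasure lam Q σ) (hfin : σ (N ⁻¹' Ioc 0 1) ≠ ∞) :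
    (σ.restrict (N ⁻¹' Ioi 0)).map (fun x => (sphereProj lam N x, N x)) =
      (sphereMeasure σ lam N Q).prod (radialMeasure Q) := by
  have := isFiniteMeasure_sphereMeasure (lam := lam) (Q := Q) hfin
  have hΦ : Measurable fun x => (sphereProj lam N x, N x) :=
    (measurable_sphereProj lam hN).prodMk hN
  refine (Measure.prod_eq_generateFrom MeasurableSpace.generateFrom_measurableSet
    ((borel_eq_generateFrom_Iic ℝ).symm.trans BorelSpace.measurable_eq.symm)
    MeasurableSpace.isPiSystem_measurableSet isPiSystem_Iic
    (sphereMeasure σ lam N Q).toFiniteSpanningSetsIn (finiteSpanningSetsIn_radialMeasure_Iic hQ)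
    fun E (hE : MeasurableSet E) => forall_mem_range.2 fun b => ?_).symm
  have hsector : (fun x => (sphereProj lam N x, N x)) ⁻¹' E ×ˢ Iic b ∩ N ⁻¹' Ioi 0 =
      sphereProj lam N ⁻¹' E ∩ N ⁻¹' Ioc 0 b := by
    ext x
    simp only [mk_preimage_prod, mem_inter_iff, mem_preimage, mem_Iic, mem_Ioi, mem_Ioc]
    tauto
  rw [Measure.map_apply hΦ (hE.prod measurableSet_Iic), Measure.restrict_apply
    (hΦ (hE.prod measurableSet_Iic)), hsector, sphereMeasure_apply hN hE]
  rcases le_or_gt b 0 with hb | hb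
  · simp [radialMeasure_Iic_of_nonpos hb, Ioc_eq_empty (not_lt.2 hb)]
  rw [radialMeasure_Iic hQ hb.le, ← image_dilate_sector hNh E hb,
    hσ b hb _ ((measurable_sphereProj lam hN hE).inter (hN measurableSet_Ioc)), mul_right_comm,
    ← ENNReal.ofReal_mul hQ.le, mul_div_cancel₀ _ hQ.ne']

theorem map_dilate_prod_sphereMeasure (hQ : 0 < Q) (hN : Measurable N)
    (hNh : IsHomogeneous lam N) (hσ : IsHomogeneousMeasure lam Q σ)
    (hfin : σ (N ⁻¹' Ioc 0 1) ≠ ∞) (hpos : ∀ᵐ x ∂σ, 0 < N x) :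
    ((sphereMeasure σ lam N Q).prod (radialMeasure Q)).map (fun p => dilate lam p.2 p.1) = σ := by
  rw [← map_restrict_pos_eq_prod hQ hN hNh hσ hfin,
    Measure.map_map (measurable_dilate_uncurry lam) ((measurable_sphereProj lam hN).prodMk hN),
    Measure.restrict_eq_self_of_ae_mem (s := N ⁻¹' Ioi 0) hpos]
  conv_rhs => rw [← Measure.map_id (μ := σ)]
  exact Measure.map_congr (hpos.mono fun x hx => dilate_sphereProj hx)

theorem lintegral_eq_lintegral_sphereMeasure (hQ : 0 < Q) (hN : Measurable N)
    (hNh : IsHomogeneous lam N) (hσ : IsHomogeneousMeasure lam Q σ)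
    (hfin : σ (N ⁻¹' Ioc 0 1) ≠ ∞) (hpos : ∀ᵐ x ∂σ, 0 < N x)
    {f : (ι → ℝ) → ℝ≥0∞} (hf : Measurable f) :
    ∫⁻ x, f x ∂σ = ∫⁻ ω, (∫⁻ t in Ioi 0, f (dilate lam t ω) * ENNReal.ofReal (t ^ (Q - 1)))
      ∂sphereMeasure σ lam N Q := by
  have hfT : Measurable fun p : (ι → ℝ) × ℝ => f (dilate lam p.2 p.1) :=
    hf.comp (measurable_dilate_uncurry lam)
  conv_lhs => rw [← map_dilate_prod_sphereMeasure hQ hN hNh hσ hfin hpos]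
  rw [lintegral_map hf (measurable_dilate_uncurry lam), lintegral_prod _ hfT.aemeasurable]
  exact lintegral_congr fun ω => lintegral_radialMeasure (hfT.comp measurable_prodMk_left)

lemma lintegral_comap_sphereMeasure (hN : Measurable N) (hNh : IsHomogeneous lam N)
    (g : (ι → ℝ) → ℝ≥0∞) :
    ∫⁻ ω, g ω ∂(sphereMeasure σ lam N Q).comap (Subtype.val : {x // N x = 1} → ι → ℝ) =
      ∫⁻ x, g x ∂sphereMeasure σ lam N Q := by
  have hemb : MeasurableEmbedding (Subtype.val : {x // N x = 1} → ι → ℝ) :=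
    .subtype_coe (hN (measurableSet_singleton 1))
  rw [← hemb.lintegral_map, hemb.map_comap, Subtype.range_coe_subtype,
    Measure.restrict_eq_self_of_ae_mem (s := {x | N x = 1}) (ae_sphereMeasure hN hNh)]

lemma measure_singleton_zero [Countable ι] (hQ : 0 < Q) (hσ : IsHomogeneousMeasure lam Q σ)
    (hfin : σ {0} ≠ ∞) : σ {0} = 0 := by
  have h := hσ 2 two_pos {0} (measurableSet_singleton 0)
  rw [image_singleton, dilate_zero_right] at h
  by_contra h0
  have h1 : (1 : ℝ≥0∞) = ENNReal.ofReal (2 ^ Q) :=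
    (ENNReal.mul_left_inj h0 hfin).1 (by rwa [one_mul])
  exact (Real.one_lt_rpow one_lt_two hQ).ne (ENNReal.ofReal_eq_one.1 h1.symm).symm

end HomogeneousPolar

open HomogeneousPolar

/-- Polar decomposition of a `δ_t`-homogeneous regular Borel measure `σ` of degree `Q > 0` on
`ℝ^n`: the unit sphere `S` of a homogeneous norm is compact and there is a regular Borel measure
`τ` on `S` such that `∫ f dσ = ∫_S ∫_0^∞ f(δ_t ω) t^{Q-1} dt dτ(ω)` for all nonnegative Borel
functions `f`. -/
theorem homogeneous_measure_polar_decomposition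
    (n : ℕ) (lam : Fin n → ℝ) (hlam : ∀ i, 1 ≤ lam i)
    (N : (Fin n → ℝ) → ℝ) (hNc : Continuous N) (hNnn : ∀ x, 0 ≤ N x)
    (hNz : ∀ x, N x = 0 ↔ x = 0)
    (hNh : ∀ t : ℝ, 0 < t → ∀ x, N (fun i => t ^ lam i * x i) = t * N x)
    (σ : Measure (Fin n → ℝ)) (hreg : σ.Regular) (Q : ℝ) (hQ : 0 < Q)
    (hhom : ∀ t : ℝ, 0 < t → ∀ A : Set (Fin n → ℝ), MeasurableSet A →
      σ ((fun x => fun i => t ^ lam i * x i) '' A) = ENNReal.ofReal (t ^ Q) * σ A) :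
    IsCompact {x : Fin n → ℝ | N x = 1} ∧
    ∃ τ : Measure {x : Fin n → ℝ // N x = 1}, τ.Regular ∧
      ∀ f : (Fin n → ℝ) → ENNReal, Measurable f →
        ∫⁻ x, f x ∂σ =
          ∫⁻ ω, (∫⁻ t in Ioi (0 : ℝ),
            f (fun i => t ^ lam i * (ω : Fin n → ℝ) i) * ENNReal.ofReal (t ^ (Q - 1))) ∂τ := by
  have hpos : ∀ x, x ≠ 0 → 0 < N x := fun x hx => (hNnn x).lt_of_ne' fun h => hx ((hNz x).1 h)
  have hball := isCompact_setOf_le_one (fun i => one_pos.trans_le (hlam i)) hNc hpos hNh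
  have hS : IsCompact {x | N x = 1} :=
    hball.of_isClosed_subset (isClosed_eq hNc continuous_const) fun x hx => hx.le
  have hball_fin : σ {x | N x ≤ 1} ≠ ∞ := hball.measure_lt_top.ne
  have hfin : σ (N ⁻¹' Ioc 0 1) ≠ ∞ := measure_ne_top_of_subset (fun x hx => hx.2) hball_fin
  have hσ0 : σ {0} = 0 := measure_singleton_zero hQ hhom <|
    measure_ne_top_of_subset (by simp [(hNz 0).2 rfl]) hball_fin
  have hσpos : ∀ᵐ x ∂σ, 0 < N x :=
    ae_iff.2 <| measure_mono_null (fun x hx => by_contra fun h0 => hx (hpos x h0)) hσ0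
  have := isFiniteMeasure_sphereMeasure (lam := lam) (Q := Q) hfin
  have : CompactSpace {x // N x = 1} := isCompact_iff_compactSpace.1 hS
  refine ⟨hS, (sphereMeasure σ lam N Q).comap Subtype.val, inferInstance, fun f hf => ?_⟩
  rw [lintegral_eq_lintegral_sphereMeasure hQ hNc.measurable hNh hhom hfin hσpos hf,
    ← lintegral_comap_sphereMeasure hNc.measurable hNh]
  rfl
end

section
/- Let σ be a regular Borel measure on ℝ^n that is homogeneous of degree Q > 0 with respect to dilations δ_t (i.e. σ(δ_t A) = t^Q σ(A)), and finite on compact sets. Then σ is locally 1-bounded on ℝ^n∖{0}: for every compact K ⊆ ℝ^n∖{0} and every ε > 0 there exist constants C, r̄ > 0 such that σ(B(x,r)) ≤ C r^{1−ε} for all x ∈ K and 0 < r ≤ r̄, where B(x,r) denotes the Euclidean ball. -/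
/-! For `x` in a compact set avoiding the origin some coordinate has `|x i| ≥ δ > 0`, and since
`λ_i ≥ 1` the dilations `δ_t`, `1 ≤ t ≤ 2`, move that coordinate apart at rate at least `|x i|`:
`b^λ - a^λ ≥ b - a`. Hence the dilates of `B(x, r)` by `1 + k h`, with `h ≍ r / δ` and
`k < 1 / h`, are pairwise disjoint. Each has measure `t^Q σ(B(x, r)) ≥ σ(B(x, r))` and all lie in
one compact set, so `σ(B(x, r)) ≲ h ≍ r`, which is stronger than the bound `r^{1-ε}`. -/

open MeasureTheory Set Function Metric
open scoped ENNReal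

lemma Real.rpow_le_two_rpow {t l Λ : ℝ} (ht₀ : 0 ≤ t) (ht : t ≤ 2) (hl : 0 ≤ l) (hlΛ : l ≤ Λ) :
    t ^ l ≤ 2 ^ Λ :=
  (Real.rpow_le_rpow ht₀ ht hl).trans (Real.rpow_le_rpow_of_exponent_le one_le_two hlΛ)

lemma Real.sub_le_rpow_sub_rpow {l a b : ℝ} (hl : 1 ≤ l) (ha : 1 ≤ a) (hab : a ≤ b) :
    b - a ≤ b ^ l - a ^ l := by
  have ha₀ : 0 < a := one_pos.trans_le ha
  have hratio : b / a ≤ (b / a) ^ l := Real.self_le_rpow_of_one_le ((one_le_div ha₀).2 hab) hl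
  have hpow : a ≤ a ^ l := Real.self_le_rpow_of_one_le ha hl
  have hsplit : b ^ l = a ^ l * (b / a) ^ l := by
    rw [← Real.mul_rpow ha₀.le (div_nonneg (ha₀.le.trans hab) ha₀.le), mul_div_cancel₀ _ ha₀.ne']
  calc b - a = a * (b / a - 1) := by field_simp
    _ ≤ a ^ l * (b / a - 1) := by gcongr; exact sub_nonneg.2 ((one_le_div ha₀).2 hab)
    _ ≤ a ^ l * ((b / a) ^ l - 1) := by gcongr
    _ = b ^ l - a ^ l := by rw [hsplit]; ring

section Dilation

variable {ι : Type*}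

noncomputable def dilate (lam : ι → ℝ) (t : ℝ) (x : ι → ℝ) : ι → ℝ := fun i => t ^ lam i * x i

variable (lam : ι → ℝ)

lemma dilate_dilate {s t : ℝ} (hs : 0 ≤ s) (ht : 0 ≤ t) (x : ι → ℝ) :
    dilate lam s (dilate lam t x) = dilate lam (s * t) x := by
  funext i
  simp only [dilate, Real.mul_rpow hs ht]
  ring

lemma dilate_one (x : ι → ℝ) : dilate lam 1 x = x := by
  funext i
  simp [dilate]

lemma image_dilate {t : ℝ} (ht : 0 < t) (A : Set (ι → ℝ)) :
    dilate lam t '' A = dilate lam t⁻¹ ⁻¹' A := by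
  refine congrFun (image_eq_preimage_of_inverse (fun x => ?_) (fun x => ?_)) A
  · rw [dilate_dilate lam (inv_nonneg.2 ht.le) ht.le, inv_mul_cancel₀ ht.ne', dilate_one]
  · rw [dilate_dilate lam ht.le (inv_nonneg.2 ht.le), mul_inv_cancel₀ ht.ne', dilate_one]

lemma continuous_dilate (t : ℝ) : Continuous (dilate lam t) :=
  continuous_pi fun i => continuous_const.mul (continuous_apply i)

lemma MeasurableSet.image_dilate [Countable ι] {t : ℝ} (ht : 0 < t) {A : Set (ι → ℝ)}
    (hA : MeasurableSet A) : MeasurableSet (dilate lam t '' A) := by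
  rw [_root_.image_dilate lam ht]
  exact (continuous_dilate lam _).measurable hA

variable [Fintype ι]

lemma abs_dilate_apply_sub_lt {Λ t r : ℝ} {x y : ι → ℝ} {i : ι} (hy : y ∈ ball x r)
    (ht₀ : 0 < t) (ht : t ≤ 2) (hl : 0 ≤ lam i) (hlΛ : lam i ≤ Λ) :
    |dilate lam t y i - t ^ lam i * x i| < 2 ^ Λ * r := by
  have hyx : |y i - x i| < r := by
    simpa [Real.dist_eq] using (dist_pi_lt_iff (pos_of_mem_ball hy)).1 (mem_ball.1 hy) i
  have htl : 0 < t ^ lam i := Real.rpow_pos_of_pos ht₀ _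
  calc |dilate lam t y i - t ^ lam i * x i| = t ^ lam i * |y i - x i| := by
        rw [dilate, ← mul_sub, abs_mul, abs_of_pos htl]
    _ < t ^ lam i * r := by gcongr
    _ ≤ 2 ^ Λ * r :=
      mul_le_mul_of_nonneg_right (Real.rpow_le_two_rpow ht₀.le ht hl hlΛ) (pos_of_mem_ball hy).le

lemma disjoint_image_dilate_ball {Λ r a b : ℝ} {x : ι → ℝ} {i : ι} (hl : 1 ≤ lam i)
    (hlΛ : lam i ≤ Λ) (ha : 1 ≤ a) (hab : a ≤ b) (hb : b ≤ 2)
    (hsep : 2 * 2 ^ Λ * r ≤ (b - a) * |x i|) :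
    Disjoint (dilate lam a '' ball x r) (dilate lam b '' ball x r) := by
  rw [Set.disjoint_left]
  rintro _ ⟨y, hy, rfl⟩ ⟨y', hy', hyy'⟩
  have hl₀ : 0 ≤ lam i := zero_le_one.trans hl
  have hya := abs_dilate_apply_sub_lt lam hy (one_pos.trans_le ha) (hab.trans hb) hl₀ hlΛ
  have hyb := abs_dilate_apply_sub_lt lam hy' (one_pos.trans_le (ha.trans hab)) hb hl₀ hlΛ
  rw [hyy'] at hyb
  have hgap : (b - a) * |x i| ≤ |b ^ lam i * x i - a ^ lam i * x i| := by
    have hpow := Real.sub_le_rpow_sub_rpow hl ha hab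
    rw [← sub_mul, abs_mul, abs_of_nonneg (a := b ^ lam i - a ^ lam i) (by linarith)]
    exact mul_le_mul_of_nonneg_right hpow (abs_nonneg _)
  have htri := abs_sub_le (b ^ lam i * x i) (dilate lam a y i) (a ^ lam i * x i)
  rw [abs_sub_comm] at hyb
  linarith

lemma norm_dilate_le {Λ t : ℝ} (hlam : ∀ i, 0 ≤ lam i) (hΛ : ∀ i, lam i ≤ Λ) (ht₀ : 0 ≤ t)
    (ht : t ≤ 2) (x : ι → ℝ) : ‖dilate lam t x‖ ≤ 2 ^ Λ * ‖x‖ := by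
  refine (pi_norm_le_iff_of_nonneg (by positivity)).2 fun i => ?_
  rw [dilate, norm_mul, Real.norm_of_nonneg (Real.rpow_nonneg ht₀ _)]
  exact mul_le_mul (Real.rpow_le_two_rpow ht₀ ht (hlam i) (hΛ i)) (norm_le_pi_norm x i)
    (norm_nonneg _) (by positivity)

lemma image_dilate_ball_subset_closedBall {Λ t r : ℝ} (hlam : ∀ i, 0 ≤ lam i)
    (hΛ : ∀ i, lam i ≤ Λ) (ht₀ : 0 ≤ t) (ht : t ≤ 2) (x : ι → ℝ) :
    dilate lam t '' ball x r ⊆ closedBall 0 (2 ^ Λ * (‖x‖ + r)) := by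
  rintro _ ⟨y, hy, rfl⟩
  rw [mem_closedBall_zero_iff]
  calc ‖dilate lam t y‖ ≤ 2 ^ Λ * ‖y‖ := norm_dilate_le lam hlam hΛ ht₀ ht y
    _ ≤ 2 ^ Λ * (‖x‖ + r) := by
      gcongr
      exact (norm_le_norm_add_norm_sub' y x).trans (by linarith [mem_ball_iff_norm.1 hy])

end Dilation

lemma MeasureTheory.card_mul_le_measure_of_pairwise_disjoint {α ι : Type*} [MeasurableSpace α]
    [Fintype ι] {μ : Measure α} {S : ι → Set α} {T : Set α} {m : ℝ≥0∞}
    (hS : ∀ k, MeasurableSet (S k)) (hd : Pairwise (Disjoint on S)) (hST : ∀ k, S k ⊆ T)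
    (hm : ∀ k, m ≤ μ (S k)) : Fintype.card ι * m ≤ μ T :=
  calc (Fintype.card ι : ℝ≥0∞) * m = ∑ _k : ι, m := by
        rw [Finset.sum_const, Finset.card_univ, nsmul_eq_mul]
    _ ≤ ∑ k, μ (S k) := Finset.sum_le_sum fun k _ => hm k
    _ = μ (⋃ k, S k) := by rw [measure_iUnion hd hS, tsum_fintype]
    _ ≤ μ T := measure_mono (iUnion_subset hST)

lemma ENNReal.le_ofReal_two_mul_of_floor_inv_mul_le {h : ℝ} {m M : ℝ≥0∞} (h₀ : 0 < h)
    (h₂ : h ≤ 1 / 2) (hM : M ≠ ⊤) (hle : (⌊h⁻¹⌋₊ : ℝ≥0∞) * m ≤ M) :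
    m ≤ ENNReal.ofReal (2 * h * M.toReal) := by
  set N := ⌊h⁻¹⌋₊
  have hN : 1 ≤ 2 * h * N := by
    have := Nat.sub_one_lt_floor h⁻¹
    have : 2 ≤ h⁻¹ := by rw [le_inv_comm₀ two_pos h₀]; linarith
    have : 2 * h * h⁻¹ = 2 := by field_simp
    nlinarith
  have hN₁ : 1 ≤ N := by
    by_contra! h0
    rw [Nat.lt_one_iff.1 h0] at hN
    norm_num at hN
  have hm : m ≠ ⊤ :=
    ne_top_of_le_ne_top hM ((le_mul_of_one_le_left' (by exact_mod_cast hN₁)).trans hle)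
  have hreal : N * m.toReal ≤ M.toReal := by
    simpa [ENNReal.toReal_mul] using ENNReal.toReal_mono hM hle
  rw [← ENNReal.ofReal_toReal hm]
  refine ENNReal.ofReal_le_ofReal ?_
  have := ENNReal.toReal_nonneg (a := m)
  nlinarith

section Homogeneous

variable {ι : Type*}

def IsHomogeneous (lam : ι → ℝ) (σ : Measure (ι → ℝ)) (Q : ℝ) : Prop :=
  ∀ t : ℝ, 0 < t → ∀ A : Set (ι → ℝ), MeasurableSet A →
    σ (dilate lam t '' A) = ENNReal.ofReal (t ^ Q) * σ A

variable {lam : ι → ℝ} {σ : Measure (ι → ℝ)} {Q : ℝ}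

lemma IsHomogeneous.measure_le_measure_image_dilate [Countable ι] (hσ : IsHomogeneous lam σ Q)
    (hQ : 0 ≤ Q) {t : ℝ} (ht : 1 ≤ t) {A : Set (ι → ℝ)} (hA : MeasurableSet A) :
    σ A ≤ σ (dilate lam t '' A) := by
  rw [hσ t (one_pos.trans_le ht) A hA]
  exact le_mul_of_one_le_left' (ENNReal.one_le_ofReal.2 (Real.one_le_rpow ht hQ))

lemma IsHomogeneous.floor_inv_mul_measure_ball_le [Fintype ι] (hσ : IsHomogeneous lam σ Q)
    (hQ : 0 ≤ Q) (hlam : ∀ i, 1 ≤ lam i) {Λ : ℝ} (hΛ : ∀ i, lam i ≤ Λ) {x : ι → ℝ} {i : ι} {r h : ℝ}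
    (h₀ : 0 < h) (hsep : 2 * 2 ^ Λ * r ≤ h * |x i|) :
    (⌊h⁻¹⌋₊ : ℝ≥0∞) * σ (ball x r) ≤ σ (closedBall 0 (2 ^ Λ * (‖x‖ + r))) := by
  set N := ⌊h⁻¹⌋₊
  let t : Fin N → ℝ := fun k => 1 + (k : ℕ) * h
  have ht₁ : ∀ k, 1 ≤ t k := fun k => by
    simp only [t]; nlinarith [Nat.cast_nonneg (α := ℝ) (k : ℕ)]
  have ht₂ : ∀ k, t k ≤ 2 := fun k => by
    have hk : ((k : ℕ) : ℝ) + 1 ≤ h⁻¹ := by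
      have : (k : ℕ) + 1 ≤ N := k.isLt
      exact le_trans (by exact_mod_cast this) (Nat.floor_le (inv_nonneg.2 h₀.le))
    have : h⁻¹ * h = 1 := inv_mul_cancel₀ h₀.ne'
    simp only [t]; nlinarith
  have hlam₀ : ∀ i, 0 ≤ lam i := fun i => zero_le_one.trans (hlam i)
  have hmeas : ∀ k, MeasurableSet (dilate lam (t k) '' ball x r) := fun k =>
    measurableSet_ball.image_dilate lam (one_pos.trans_le (ht₁ k))
  have hdisj : Pairwise (Disjoint on fun k => dilate lam (t k) '' ball x r) := by
    refine (pairwise_disjoint_on _).2 fun k j hkj => ?_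
    have hkj' : ((k : ℕ) : ℝ) + 1 ≤ (j : ℕ) := by exact_mod_cast hkj
    have hgap : h ≤ t j - t k := by simp only [t]; nlinarith
    exact disjoint_image_dilate_ball lam (hlam i) (hΛ i) (ht₁ k) (by linarith) (ht₂ j)
      (hsep.trans (mul_le_mul_of_nonneg_right hgap (abs_nonneg _)))
  simpa [N] using card_mul_le_measure_of_pairwise_disjoint hmeas hdisj
    (fun k => image_dilate_ball_subset_closedBall lam hlam₀ hΛ (zero_le_one.trans (ht₁ k))
      (ht₂ k) x)
    (fun k => hσ.measure_le_measure_image_dilate hQ (ht₁ k) measurableSet_ball)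

end Homogeneous

lemma exists_pos_forall_exists_le_abs_apply {ι : Type*} [Fintype ι] {K : Set (ι → ℝ)}
    (hK : IsClosed K) (hK₀ : (0 : ι → ℝ) ∉ K) : ∃ δ > 0, ∀ x ∈ K, ∃ i, δ ≤ |x i| := by
  obtain ⟨δ, hδ, hball⟩ := Metric.isOpen_iff.1 hK.isOpen_compl 0 hK₀
  refine ⟨δ, hδ, fun x hx => ?_⟩
  by_contra! hsmall
  exact hball (mem_ball_zero_iff.2 ((pi_norm_lt_iff hδ).2 hsmall)) hx

lemma setOf_sum_sq_sub_lt_subset_ball {ι : Type*} [Fintype ι] (x : ι → ℝ) {r : ℝ} (hr : 0 ≤ r) :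
    {y : ι → ℝ | ∑ i, (y i - x i) ^ 2 < r ^ 2} ⊆ ball x r := by
  intro y hy
  refine mem_ball.2 ((dist_pi_lt_iff ?_).2 fun i => ?_)
  · by_contra! hr₀
    rw [le_antisymm hr₀ hr] at hy
    exact (Finset.sum_nonneg fun i _ => sq_nonneg (y i - x i)).not_gt (by simpa using hy)
  · rw [Real.dist_eq]
    exact abs_lt_of_sq_lt_sq ((Finset.single_le_sum (fun j _ => sq_nonneg (y j - x j))
      (Finset.mem_univ i)).trans_lt hy) hr

theorem IsHomogeneous.exists_measure_ball_le_mul_radius {ι : Type*} [Fintype ι] {lam : ι → ℝ}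
    {σ : Measure (ι → ℝ)} [IsFiniteMeasureOnCompacts σ] {Q : ℝ} (hσ : IsHomogeneous lam σ Q)
    (hQ : 0 ≤ Q) (hlam : ∀ i, 1 ≤ lam i) {K : Set (ι → ℝ)} (hK : IsCompact K)
    (hK₀ : (0 : ι → ℝ) ∉ K) :
    ∃ C > 0, ∃ rb > 0, ∀ x ∈ K, ∀ r, 0 < r → r ≤ rb → σ (ball x r) ≤ ENNReal.ofReal (C * r) := by
  obtain ⟨δ, hδ, hδK⟩ := exists_pos_forall_exists_le_abs_apply hK.isClosed hK₀
  obtain ⟨R, hR⟩ := hK.isBounded.subset_closedBall 0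
  obtain ⟨Λ, hΛ⟩ := (Set.finite_range lam).bddAbove
  set M := σ (closedBall 0 (2 ^ Λ * (R + 1)))
  refine ⟨4 * 2 ^ Λ / δ * (M.toReal + 1), by positivity, min 1 (δ / (4 * 2 ^ Λ)), by positivity,
    fun x hx r hr hrb => ?_⟩
  obtain ⟨i, hi⟩ := hδK x hx
  have hr₁ : r ≤ 1 := hrb.trans (min_le_left _ _)
  have hrδ : r ≤ δ / (4 * 2 ^ Λ) := hrb.trans (min_le_right _ _)
  have hxR : ‖x‖ ≤ R := mem_closedBall_zero_iff.1 (hR hx)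
  set h := 2 * 2 ^ Λ * r / δ
  have hh : h * δ = 2 * 2 ^ Λ * r := div_mul_cancel₀ _ hδ.ne'
  have hh₂ : h ≤ 1 / 2 := by
    rw [le_div_iff₀ (by positivity)] at hrδ
    rw [div_le_iff₀ hδ]
    linarith
  have hcount : (⌊h⁻¹⌋₊ : ℝ≥0∞) * σ (ball x r) ≤ M :=
    (hσ.floor_inv_mul_measure_ball_le hQ hlam (fun i => hΛ ⟨i, rfl⟩) (by positivity)
      (hh.symm.le.trans (mul_le_mul_of_nonneg_left hi (by positivity)))).trans
      (measure_mono (closedBall_subset_closedBall (by gcongr)))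
  calc σ (ball x r) ≤ ENNReal.ofReal (2 * h * M.toReal) :=
        ENNReal.le_ofReal_two_mul_of_floor_inv_mul_le (by positivity) hh₂
          measure_closedBall_lt_top.ne hcount
    _ ≤ ENNReal.ofReal (4 * 2 ^ Λ / δ * (M.toReal + 1) * r) := by
      refine ENNReal.ofReal_le_ofReal ?_
      have : 2 * h = 4 * 2 ^ Λ / δ * r := by simp only [h]; ring
      rw [this]
      have : 0 ≤ 4 * 2 ^ Λ / δ * r := by positivity
      nlinarith

theorem homogeneous_measure_locally_one_bounded_general
    (n : ℕ) (lam : Fin n → ℝ) (hlam : ∀ i, 1 ≤ lam i)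
    (σ : Measure (Fin n → ℝ)) (Q : ℝ) (hQ : 0 < Q)
    (hhom : ∀ t : ℝ, 0 < t → ∀ A : Set (Fin n → ℝ), MeasurableSet A →
      σ ((fun x => fun i => t ^ lam i * x i) '' A) = ENNReal.ofReal (t ^ Q) * σ A)
    (hfin : ∀ K : Set (Fin n → ℝ), IsCompact K → σ K < ⊤) :
    ∀ K : Set (Fin n → ℝ), IsCompact K → (0 : Fin n → ℝ) ∉ K → ∀ ε : ℝ, 0 < ε →
      ∃ C : ℝ, 0 < C ∧ ∃ rb : ℝ, 0 < rb ∧ ∀ x ∈ K, ∀ r : ℝ, 0 < r → r ≤ rb →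
        σ {y : Fin n → ℝ | ∑ i, (y i - x i) ^ 2 < r ^ 2} ≤
          ENNReal.ofReal (C * r ^ ((1 : ℝ) - ε)) := by
  intro K hK hK₀ ε hε
  have : IsFiniteMeasureOnCompacts σ := ⟨hfin⟩
  obtain ⟨C, hC, rb, hrb, hball⟩ :=
    IsHomogeneous.exists_measure_ball_le_mul_radius (lam := lam) hhom hQ.le hlam hK hK₀
  refine ⟨C, hC, min rb 1, by positivity, fun x hx r hr hrrb => ?_⟩
  have hr₁ : r ≤ 1 := hrrb.trans (min_le_right _ _)
  calc σ {y | ∑ i, (y i - x i) ^ 2 < r ^ 2} ≤ σ (ball x r) :=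
        measure_mono (setOf_sum_sq_sub_lt_subset_ball x hr.le)
    _ ≤ ENNReal.ofReal (C * r) := hball x hx r hr (hrrb.trans (min_le_left _ _))
    _ ≤ ENNReal.ofReal (C * r ^ ((1 : ℝ) - ε)) := by
      gcongr
      exact Real.self_le_rpow_of_le_one hr.le hr₁ (by linarith)

/-- A regular Borel measure on `ℝ^n`, homogeneous of degree `Q > 0` with respect to dilations
with exponents `λ_i ≥ 1` and finite on compact sets, is locally `1`-bounded on `ℝ^n ∖ {0}`:
for every compact `K ⊆ ℝ^n ∖ {0}` and `ε > 0` there are `C, r̄ > 0` with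
`σ(B(x,r)) ≤ C r^{1-ε}` for `x ∈ K` and `0 < r ≤ r̄` (Euclidean balls). -/
theorem homogeneous_measure_locally_one_bounded
    (n : ℕ) (lam : Fin n → ℝ) (hlam : ∀ i, 1 ≤ lam i)
    (σ : Measure (Fin n → ℝ)) (hreg : σ.Regular) (Q : ℝ) (hQ : 0 < Q)
    (hhom : ∀ t : ℝ, 0 < t → ∀ A : Set (Fin n → ℝ), MeasurableSet A →
      σ ((fun x => fun i => t ^ lam i * x i) '' A) = ENNReal.ofReal (t ^ Q) * σ A)
    (hfin : ∀ K : Set (Fin n → ℝ), IsCompact K → σ K < ⊤) :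
    ∀ K : Set (Fin n → ℝ), IsCompact K → (0 : Fin n → ℝ) ∉ K → ∀ ε : ℝ, 0 < ε →
      ∃ C : ℝ, 0 < C ∧ ∃ rb : ℝ, 0 < rb ∧ ∀ x ∈ K, ∀ r : ℝ, 0 < r → r ≤ rb →
        σ {y : Fin n → ℝ | ∑ i, (y i - x i) ^ 2 < r ^ 2} ≤
          ENNReal.ofReal (C * r ^ ((1 : ℝ) - ε)) :=
  homogeneous_measure_locally_one_bounded_general n lam hlam σ Q hQ hhom hfin
end

section
/- Let m > 1 and b, σ, γ, R > 0 be real numbers. Then lim_{t→0^+} t^{−γ} ∫_R^∞ exp(−b (r^m / t)^{1/(m−1)}) e^{σ r} dr = 0. -/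
/-!
Put `α = 1 / (m - 1)`, so that `m α = 1 + α`. For `r ≥ R` this gives
`(r ^ m / t) ^ α = r ^ α t ^ (-α) r ≥ R ^ α t ^ (-α) r`, hence the integrand is at most
`exp (-s r)` with decay rate `s = b R ^ α t ^ (-α) - σ`, which tends to `∞` as `t → 0⁺`.
Once `s ≥ 1` the integral is at most `exp (-s R)`, and
`t ^ (-γ) exp (-s R) = exp (σ R) t ^ (-γ) exp (-b R ^ (1 + α) t ^ (-α)) → 0`,
because exponential decay in `t ^ (-α)` beats every power of `t`.
-/

open MeasureTheory Filter Set Topology Real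

lemma tendsto_rpow_mul_exp_neg_mul_rpow_neg_nhdsGT_zero (γ : ℝ) {α c : ℝ} (hα : 0 < α)
    (hc : 0 < c) : Tendsto (fun t : ℝ => t ^ γ * exp (-c * t ^ (-α))) (𝓝[>] 0) (𝓝 0) := by
  refine ((tendsto_rpow_mul_exp_neg_mul_atTop_nhds_zero (-γ / α) c hc).comp
    (tendsto_rpow_neg_nhdsGT_zero (neg_lt_zero.2 hα))).congr' ?_
  filter_upwards [self_mem_nhdsWithin] with t (ht : 0 < t)
  rw [Function.comp_apply, ← rpow_mul ht.le]
  congr 2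
  field_simp

lemma integral_Ioi_exp_neg_mul_le {s : ℝ} (hs : 1 ≤ s) (R : ℝ) :
    ∫ r in Ioi R, exp (-s * r) ≤ exp (-s * R) := by
  rw [integral_exp_mul_Ioi (by linarith) R, neg_div_neg_eq]
  exact div_le_self (exp_pos _).le hs

lemma rpow_mul_rpow_neg_mul_le_rpow_div {m R r t : ℝ} (hm : 1 < m) (hR : 0 ≤ R) (hRr : R ≤ r)
    (ht : 0 < t) :
    R ^ (1 / (m - 1)) * t ^ (-(1 / (m - 1))) * r ≤ (r ^ m / t) ^ (1 / (m - 1)) := by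
  set α := 1 / (m - 1)
  have hα : 0 < α := one_div_pos.2 (sub_pos.2 hm)
  have hr : 0 ≤ r := hR.trans hRr
  have hmα : m * α = α + 1 := by
    simp only [α]
    field_simp [(sub_pos.2 hm).ne']
    ring
  have hsplit : (r ^ m / t) ^ α = r ^ α * t ^ (-α) * r := by
    rw [div_rpow (rpow_nonneg hr m) ht.le, ← rpow_mul hr, hmα, rpow_add' hr (by positivity),
      rpow_one, rpow_neg ht.le]
    ring
  rw [hsplit]
  gcongr

lemma integral_Ioi_exp_neg_mul_rpow_div_mul_exp_le {m b σ R t : ℝ} (hm : 1 < m) (hb : 0 ≤ b)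
    (hR : 0 ≤ R) (ht : 0 < t) (hs : 1 ≤ b * R ^ (1 / (m - 1)) * t ^ (-(1 / (m - 1))) - σ) :
    ∫ r in Ioi R, exp (-(b * (r ^ m / t) ^ (1 / (m - 1)))) * exp (σ * r) ≤
      exp (-(b * R ^ (1 / (m - 1)) * t ^ (-(1 / (m - 1))) - σ) * R) := by
  set s := b * R ^ (1 / (m - 1)) * t ^ (-(1 / (m - 1))) - σ
  have hbound : ∀ r ∈ Ioi R,
      exp (-(b * (r ^ m / t) ^ (1 / (m - 1)))) * exp (σ * r) ≤ exp (-s * r) := by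
    intro r hr
    rw [← exp_add, exp_le_exp]
    have := mul_le_mul_of_nonneg_left (rpow_mul_rpow_neg_mul_le_rpow_div hm hR hr.le ht) hb
    linarith
  calc ∫ r in Ioi R, exp (-(b * (r ^ m / t) ^ (1 / (m - 1)))) * exp (σ * r)
      ≤ ∫ r in Ioi R, exp (-s * r) :=
        integral_mono_of_nonneg (.of_forall fun r => by positivity)
          (exp_neg_integrableOn_Ioi R (by linarith : 0 < s))
          ((ae_restrict_mem measurableSet_Ioi).mono hbound)
    _ ≤ exp (-s * R) := integral_Ioi_exp_neg_mul_le hs R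

theorem tendsto_weighted_gaussian_tail_zero_general
    (m b σ γ R : ℝ) (hm : 1 < m) (hb : 0 < b) (hR : 0 < R) :
    Tendsto (fun t : ℝ =>
        t ^ (-γ) *
          ∫ r in Ioi R, Real.exp (-(b * (r ^ m / t) ^ (1 / (m - 1)))) * Real.exp (σ * r))
      (nhdsWithin 0 (Ioi 0)) (nhds 0) := by
  set α := 1 / (m - 1)
  have hα : 0 < α := one_div_pos.2 (sub_pos.2 hm)
  have hc : 0 < b * R ^ α := by positivity
  have hrate : ∀ᶠ t in 𝓝[>] 0, 1 ≤ b * R ^ α * t ^ (-α) - σ :=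
    (tendsto_atTop_add_const_right _ (-σ) ((tendsto_rpow_neg_nhdsGT_zero
      (neg_lt_zero.2 hα)).const_mul_atTop hc)).eventually_ge_atTop 1
  have hmajorant := (tendsto_rpow_mul_exp_neg_mul_rpow_neg_nhdsGT_zero (-γ) hα
    (mul_pos hc hR)).const_mul (exp (σ * R))
  rw [mul_zero] at hmajorant
  refine squeeze_zero' ?_ ?_ hmajorant
  · filter_upwards [self_mem_nhdsWithin] with t (ht : 0 < t)
    exact mul_nonneg (rpow_nonneg ht.le _) (integral_nonneg fun r => by positivity)
  filter_upwards [self_mem_nhdsWithin, hrate] with t (ht : 0 < t) hs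
  calc t ^ (-γ) * ∫ r in Ioi R, exp (-(b * (r ^ m / t) ^ α)) * exp (σ * r)
      ≤ t ^ (-γ) * exp (-(b * R ^ α * t ^ (-α) - σ) * R) :=
        mul_le_mul_of_nonneg_left
          (integral_Ioi_exp_neg_mul_rpow_div_mul_exp_le hm hb.le hR.le ht hs)
          (rpow_nonneg ht.le _)
    _ = exp (σ * R) * (t ^ (-γ) * exp (-(b * R ^ α * R) * t ^ (-α))) := by
        rw [mul_left_comm, ← exp_add]
        ring_nf

/-- For `m > 1` and `b, σ, γ, R > 0`:
`lim_{t→0⁺} t^{-γ} ∫_R^∞ exp(-b (r^m / t)^{1/(m-1)}) e^{σ r} dr = 0`. -/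
theorem tendsto_weighted_gaussian_tail_zero
    (m b σ γ R : ℝ) (hm : 1 < m) (hb : 0 < b) (hσ : 0 < σ) (hγ : 0 < γ) (hR : 0 < R) :
    Tendsto (fun t : ℝ =>
        t ^ (-γ) *
          ∫ r in Ioi R, Real.exp (-(b * (r ^ m / t) ^ (1 / (m - 1)))) * Real.exp (σ * r))
      (nhdsWithin 0 (Ioi 0)) (nhds 0) :=
  tendsto_weighted_gaussian_tail_zero_general m b σ γ R hm hb hR
end

section
/- Let (X, μ) be a σ-finite measure space, 1 ≤ p < ∞, and (T_k)_{k∈ℕ} a sequence of bounded linear operators on L^p(X,μ). Suppose A > 0 is such that for every finite set I ⊆ ℕ and every choice of signs ε_k ∈ {−1, 1} (k ∈ I), the operator Σ_{k∈I} ε_k T_k has operator norm at most A on L^p(X,μ). Then there is a constant C_p, depending only on p, such that for all f ∈ L^p(X,μ): ‖(Σ_{k∈ℕ} |T_k f|²)^{1/2}‖_{L^p} ≤ C_p A ‖f‖_{L^p}. -/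
/-!
Averaging over all `2 ^ n` sign patterns `ε ∈ {±1}ⁿ` is the discrete form of integrating
against the Rademacher functions. For reals `a_k`, the second and fourth moments of
`S_ε = ∑ ε_k a_k` are `Q = ∑ a_k²` and at most `3 Q²`, and Hölder (Littlewood's interpolation
`M₂³ ≤ M₁² M₄`) turns this into the Khinchin lower bound `√Q ≤ √3 · avg_ε |S_ε|`. Applied
pointwise to `a_k = T_k f(x)`, Minkowski's inequality and the bound `‖∑ ε_k T_k f‖_p ≤ A ‖f‖_p`
give the finite square-function estimate with `C = √3` for every `p ≥ 1`; the partial square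
functions are then a.e. bounded, so the series converges a.e. and Fatou's lemma finishes.
-/

open MeasureTheory Filter Finset
open scoped ENNReal Topology

lemma sum_sq_pow_three_le_sq_sum_abs_mul_sum_pow_four {ι : Type*} (s : Finset ι) (x : ι → ℝ) :
    (∑ i ∈ s, x i ^ 2) ^ 3 ≤ (∑ i ∈ s, |x i|) ^ 2 * ∑ i ∈ s, x i ^ 4 := by
  set M₁ := ∑ i ∈ s, |x i|
  set M₂ := ∑ i ∈ s, x i ^ 2
  set M₃ := ∑ i ∈ s, |x i| ^ 3
  set M₄ := ∑ i ∈ s, x i ^ 4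
  have h₁ : M₂ ^ 2 ≤ M₁ * M₃ :=
    sum_sq_le_sum_mul_sum_of_sq_le_mul s (fun i _ => abs_nonneg _) (fun i _ => by positivity)
      fun i _ => le_of_eq (by rw [← sq_abs (x i)]; ring)
  have h₂ : M₃ ^ 2 ≤ M₂ * M₄ :=
    sum_sq_le_sum_mul_sum_of_sq_le_mul s (fun i _ => sq_nonneg _) (fun i _ => by positivity)
      fun i _ => le_of_eq (by rw [show x i ^ 4 = (x i ^ 2) ^ 2 by ring, ← sq_abs (x i)]; ring)
  have h₃ : M₂ ^ 3 * M₂ ≤ M₁ ^ 2 * M₄ * M₂ :=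
    calc M₂ ^ 3 * M₂ = (M₂ ^ 2) ^ 2 := by ring
      _ ≤ (M₁ * M₃) ^ 2 := pow_le_pow_left₀ (sq_nonneg _) h₁ 2
      _ = M₁ ^ 2 * M₃ ^ 2 := by ring
      _ ≤ M₁ ^ 2 * (M₂ * M₄) := mul_le_mul_of_nonneg_left h₂ (sq_nonneg _)
      _ = M₁ ^ 2 * M₄ * M₂ := by ring
  have hM₂ : 0 ≤ M₂ := sum_nonneg fun i _ => sq_nonneg (x i)
  rcases hM₂.eq_or_lt with h₀ | hpos
  · rw [← h₀, zero_pow three_ne_zero]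
    exact mul_nonneg (sq_nonneg _) (sum_nonneg fun i _ => by positivity)
  · exact le_of_mul_le_mul_right h₃ hpos

namespace MeasureTheory.Lp

lemma coeFn_sum_smul {X E 𝕜 : Type*} [MeasurableSpace X] {μ : Measure X} {p : ℝ≥0∞}
    [NormedAddCommGroup E] [NormedField 𝕜] [NormedSpace 𝕜 E] {ι : Type*} (s : Finset ι)
    (c : ι → 𝕜) (F : ι → Lp E p μ) :
    ⇑(∑ k ∈ s, c k • F k) =ᵐ[μ] fun x => ∑ k ∈ s, c k • F k x := by
  classical
  induction s using Finset.induction_on with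
  | empty =>
    simp only [sum_empty]
    exact coeFn_zero E p μ
  | insert i s hi ih =>
    filter_upwards [coeFn_add (c i • F i) (∑ k ∈ s, c k • F k), coeFn_smul (c i) (F i), ih]
      with x hadd hsmul hsum
    simp only [sum_insert hi, hadd, Pi.add_apply, hsmul, Pi.smul_apply, hsum]

end MeasureTheory.Lp

section Khinchin

variable {ι : Type*} [DecidableEq ι]

/-- A subset `J` encodes the sign pattern `ε_k = 1` on `J`, `ε_k = -1` off `J`: averaging over
`s.powerset` plays the role of integrating the Rademacher functions `(r_k)_{k ∈ s}` over
`[0, 1]`. -/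
def subsetSign (J : Finset ι) (k : ι) : ℝ := if k ∈ J then 1 else -1

lemma subsetSign_eq_one_or_eq_neg_one (J : Finset ι) (k : ι) :
    subsetSign J k = 1 ∨ subsetSign J k = -1 := by
  unfold subsetSign
  split_ifs <;> simp

def signedSum (s J : Finset ι) (a : ι → ℝ) : ℝ := ∑ k ∈ s, subsetSign J k * a k

lemma sum_powerset_insert_signedSum {s : Finset ι} {i : ι} (hi : i ∉ s) (a : ι → ℝ)
    (F : ℝ → ℝ) :
    ∑ J ∈ (insert i s).powerset, F (signedSum (insert i s) J a) =
      ∑ J ∈ s.powerset, (F (signedSum s J a - a i) + F (signedSum s J a + a i)) := by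
  rw [sum_powerset_insert hi, ← sum_add_distrib]
  refine sum_congr rfl fun J hJ => ?_
  have hiJ : i ∉ J := fun h => hi (mem_powerset.1 hJ h)
  have hsum : ∑ k ∈ s, subsetSign (insert i J) k * a k = ∑ k ∈ s, subsetSign J k * a k :=
    sum_congr rfl fun k hk => by simp [subsetSign, ne_of_mem_of_not_mem hk hi]
  simp only [signedSum, sum_insert hi, hsum]
  simp only [subsetSign, hiJ, mem_insert_self, if_true, if_false]
  ring_nf

lemma sum_powerset_signedSum_sq (s : Finset ι) (a : ι → ℝ) :
    ∑ J ∈ s.powerset, signedSum s J a ^ 2 = 2 ^ #s * ∑ k ∈ s, a k ^ 2 := by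
  induction s using Finset.induction_on with
  | empty => simp [signedSum]
  | insert i s hi ih =>
    rw [sum_powerset_insert_signedSum hi a (· ^ 2)]
    have hterm : ∀ S : ℝ, (S - a i) ^ 2 + (S + a i) ^ 2 = 2 * S ^ 2 + 2 * a i ^ 2 := fun S => by
      ring
    simp only [hterm, sum_add_distrib, ← mul_sum, ih, sum_const, card_powerset, nsmul_eq_mul,
      sum_insert hi, card_insert_of_notMem hi]
    push_cast
    ring

lemma sum_powerset_signedSum_pow_four_le (s : Finset ι) (a : ι → ℝ) :
    ∑ J ∈ s.powerset, signedSum s J a ^ 4 ≤ 3 * 2 ^ #s * (∑ k ∈ s, a k ^ 2) ^ 2 := by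
  induction s using Finset.induction_on with
  | empty => simp [signedSum]
  | insert i s hi ih =>
    rw [sum_powerset_insert_signedSum hi a (· ^ 4)]
    have hterm : ∀ S : ℝ, (S - a i) ^ 4 + (S + a i) ^ 4 =
        2 * S ^ 4 + 12 * a i ^ 2 * S ^ 2 + 2 * a i ^ 4 := fun S => by ring
    simp only [hterm, sum_add_distrib, ← mul_sum, sum_powerset_signedSum_sq, sum_const,
      card_powerset, nsmul_eq_mul, sum_insert hi, card_insert_of_notMem hi]
    push_cast
    have hN : (0 : ℝ) ≤ 2 ^ #s := by positivity
    rw [pow_succ (2 : ℝ) #s]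
    nlinarith [ih, mul_nonneg hN (pow_nonneg (sq_nonneg (a i)) 2)]

lemma two_pow_card_mul_sqrt_sum_sq_le (s : Finset ι) (a : ι → ℝ) :
    2 ^ #s * √(∑ k ∈ s, a k ^ 2) ≤ √3 * ∑ J ∈ s.powerset, |signedSum s J a| := by
  set N : ℝ := 2 ^ #s
  set Q := ∑ k ∈ s, a k ^ 2
  set M₁ := ∑ J ∈ s.powerset, |signedSum s J a|
  have hN : 0 < N := by positivity
  have hQ : 0 ≤ Q := sum_nonneg fun k _ => sq_nonneg _
  have hmoments : (N * Q) ^ 3 ≤ M₁ ^ 2 * (3 * N * Q ^ 2) := by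
    have h := sum_sq_pow_three_le_sq_sum_abs_mul_sum_pow_four s.powerset (signedSum s · a)
    rw [sum_powerset_signedSum_sq] at h
    exact h.trans (mul_le_mul_of_nonneg_left (sum_powerset_signedSum_pow_four_le s a)
      (sq_nonneg _))
  have hsq : N ^ 2 * Q ≤ 3 * M₁ ^ 2 := by
    rcases hQ.eq_or_lt with h₀ | hpos
    · rw [← h₀, mul_zero]
      positivity
    · refine le_of_mul_le_mul_right ?_ (by positivity : 0 < N * Q ^ 2)
      linear_combination hmoments
  calc N * √Q = √(N ^ 2 * Q) := by rw [Real.sqrt_mul (sq_nonneg N), Real.sqrt_sq hN.le]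
    _ ≤ √(3 * M₁ ^ 2) := Real.sqrt_le_sqrt hsq
    _ = √3 * M₁ := by
      rw [Real.sqrt_mul (by norm_num), Real.sqrt_sq (sum_nonneg fun J _ => abs_nonneg _)]

variable {X : Type*} [MeasurableSpace X] {μ : Measure X} {p : ℝ≥0∞}

lemma eLpNorm_sqrt_sum_sq_le (hp : 1 ≤ p) (s : Finset ι) {g : ι → X → ℝ}
    (hg : ∀ k, AEStronglyMeasurable (g k) μ) {B : ℝ≥0∞}
    (hB : ∀ J, eLpNorm (fun x => signedSum s J (g · x)) p μ ≤ B) :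
    eLpNorm (fun x => √(∑ k ∈ s, g k x ^ 2)) p μ ≤ ENNReal.ofReal √3 * B := by
  set N : ℝ := 2 ^ #s
  have hN : 0 < N := by positivity
  have hS : ∀ J, AEStronglyMeasurable (fun x => |signedSum s J (g · x)|) μ := fun J => by
    simp only [signedSum]
    fun_prop
  have hpointwise : ∀ x, ‖√(∑ k ∈ s, g k x ^ 2)‖ ≤
      (√3 / N) * ∑ J ∈ s.powerset, |signedSum s J (g · x)| := fun x => by
    rw [Real.norm_of_nonneg (Real.sqrt_nonneg _), div_mul_eq_mul_div, le_div_iff₀ hN, mul_comm]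
    exact two_pow_card_mul_sqrt_sum_sq_le s (g · x)
  calc eLpNorm (fun x => √(∑ k ∈ s, g k x ^ 2)) p μ
      ≤ eLpNorm (fun x => (√3 / N) * ∑ J ∈ s.powerset, |signedSum s J (g · x)|) p μ :=
        eLpNorm_mono_real hpointwise
    _ = ENNReal.ofReal (√3 / N) *
          eLpNorm (∑ J ∈ s.powerset, fun x => |signedSum s J (g · x)|) p μ := by
        rw [← Real.enorm_of_nonneg (by positivity), ← eLpNorm_const_smul]
        congr 1
        ext x
        simp
    _ ≤ ENNReal.ofReal (√3 / N) *
          ∑ J ∈ s.powerset, eLpNorm (fun x => |signedSum s J (g · x)|) p μ := by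
        gcongr
        exact eLpNorm_sum_le (fun J _ => hS J) hp
    _ ≤ ENNReal.ofReal (√3 / N) * ∑ J ∈ s.powerset, B := by
        gcongr with J
        simpa only [← Real.norm_eq_abs, eLpNorm_norm] using hB J
    _ = ENNReal.ofReal √3 * B := by
        rw [sum_const, card_powerset, nsmul_eq_mul, ← mul_assoc, Nat.cast_pow, Nat.cast_ofNat,
          ← ENNReal.ofReal_ofNat 2, ← ENNReal.ofReal_pow zero_le_two,
          ← ENNReal.ofReal_mul (by positivity), div_mul_cancel₀ _ hN.ne']

lemma eLpNorm_sqrt_tsum_sq_le (hp : p ≠ 0) {g : ℕ → X → ℝ} (hg : ∀ k, Measurable (g k))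
    {B : ℝ≥0∞} (hB_top : B ≠ ∞)
    (hB : ∀ n, eLpNorm (fun x => √(∑ k ∈ range n, g k x ^ 2)) p μ ≤ B) :
    eLpNorm (fun x => √(∑' k, g k x ^ 2)) p μ ≤ B := by
  have hmeas : ∀ n, Measurable fun x => √(∑ k ∈ range n, g k x ^ 2) := fun n => by fun_prop
  have hfinite := ae_bdd_liminf_atTop_of_eLpNorm_bdd (R := B.toNNReal) hp hmeas
    (by simpa only [ENNReal.coe_toNNReal hB_top] using hB)
  refine Lp.eLpNorm_le_of_ae_tendsto (u := atTop) (Eventually.of_forall hB)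
    (fun n => (hmeas n).aestronglyMeasurable) ?_
  filter_upwards [hfinite] with x hx
  have hmono : Monotone fun n => ‖√(∑ k ∈ range n, g k x ^ 2)‖ₑ := fun m n hmn => by
    simp only [← ofReal_norm, Real.norm_of_nonneg (Real.sqrt_nonneg _)]
    gcongr
  rw [(tendsto_atTop_iSup hmono).liminf_eq] at hx
  have hsummable : Summable fun k => g k x ^ 2 := by
    refine summable_of_sum_range_le (c := ((⨆ n, ‖√(∑ k ∈ range n, g k x ^ 2)‖ₑ).toReal) ^ 2)
      (fun k => sq_nonneg _) fun n => ?_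
    have h := (le_iSup (fun n => ‖√(∑ k ∈ range n, g k x ^ 2)‖ₑ) n)
    rw [← ofReal_norm, Real.norm_of_nonneg (Real.sqrt_nonneg _),
      ENNReal.ofReal_le_iff_le_toReal hx.ne, Real.sqrt_le_left ENNReal.toReal_nonneg] at h
    exact h
  exact (Real.continuous_sqrt.tendsto _).comp hsummable.hasSum.tendsto_sum_nat

lemma eLpNorm_signedSum_apply_le [Fact (1 ≤ p)] {T : ι → Lp ℝ p μ →L[ℝ] Lp ℝ p μ} {A : ℝ}
    (s J : Finset ι) (hT : ‖∑ k ∈ s, subsetSign J k • T k‖ ≤ A) (f : Lp ℝ p μ) :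
    eLpNorm (fun x => signedSum s J (T · f x)) p μ ≤ ENNReal.ofReal A * eLpNorm f p μ := by
  set G := ∑ k ∈ s, subsetSign J k • T k
  have hG : G f = ∑ k ∈ s, subsetSign J k • T k f := by simp [G]
  have hae : (fun x => signedSum s J (T · f x)) =ᵐ[μ] G f := by
    rw [hG]
    filter_upwards [Lp.coeFn_sum_smul s (subsetSign J) (T · f)] with x hx
    simp only [hx, signedSum, smul_eq_mul]
  calc eLpNorm (fun x => signedSum s J (T · f x)) p μ = ‖G f‖ₑ := by
        rw [eLpNorm_congr_ae hae, Lp.enorm_def]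
    _ ≤ ‖G‖ₑ * ‖f‖ₑ := G.le_opENorm f
    _ ≤ ENNReal.ofReal A * eLpNorm f p μ := by
        rw [← ofReal_norm, Lp.enorm_def]
        gcongr

end Khinchin

theorem square_function_estimate_of_uniform_signed_sums_general
    (p : ℝ≥0∞) [Fact (1 ≤ p)] :
    ∃ C : ℝ, 0 < C ∧
      ∀ (X : Type u) [MeasurableSpace X] (μ : Measure X) [SigmaFinite μ]
        (T : ℕ → Lp ℝ p μ →L[ℝ] Lp ℝ p μ) (A : ℝ), 0 < A →
        (∀ (I : Finset ℕ) (ε : ℕ → ℝ), (∀ k, ε k = 1 ∨ ε k = -1) →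
          ‖∑ k ∈ I, ε k • T k‖ ≤ A) →
        ∀ f : Lp ℝ p μ,
          eLpNorm (fun x => Real.sqrt (∑' k, ((T k f : X → ℝ) x) ^ 2)) p μ ≤
            ENNReal.ofReal (C * A) * eLpNorm (f : X → ℝ) p μ := by
  refine ⟨√3, by positivity, fun X _ μ _ T A _ hT f => ?_⟩
  have hp : 1 ≤ p := Fact.out
  have hsigned (s J : Finset ℕ) :
      eLpNorm (fun x => signedSum s J (T · f x)) p μ ≤ ENNReal.ofReal A * eLpNorm f p μ :=
    eLpNorm_signedSum_apply_le s J (hT s _ (subsetSign_eq_one_or_eq_neg_one J)) f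
  calc eLpNorm (fun x => √(∑' k, T k f x ^ 2)) p μ
      ≤ ENNReal.ofReal √3 * (ENNReal.ofReal A * eLpNorm f p μ) :=
        eLpNorm_sqrt_tsum_sq_le (one_pos.trans_le hp).ne'
          (fun k => (Lp.stronglyMeasurable _).measurable)
          (ENNReal.mul_ne_top ENNReal.ofReal_ne_top
            (ENNReal.mul_ne_top ENNReal.ofReal_ne_top (Lp.eLpNorm_ne_top f)))
          fun n => eLpNorm_sqrt_sum_sq_le hp (range n) (fun k => Lp.aestronglyMeasurable _)
            (hsigned (range n))
    _ = ENNReal.ofReal (√3 * A) * eLpNorm f p μ := by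
        rw [ENNReal.ofReal_mul (Real.sqrt_nonneg 3), mul_assoc]

/-- Khinchin-type square-function estimate: if `(T_k)` are bounded operators on `L^p(X,μ)`
(`1 ≤ p < ∞`, `μ` σ-finite) such that every finite signed sum `Σ_{k ∈ I} ε_k T_k` has operator
norm at most `A`, then `‖(Σ_k |T_k f|²)^{1/2}‖_p ≤ C_p A ‖f‖_p` with `C_p` depending only
on `p`. -/
theorem square_function_estimate_of_uniform_signed_sums
    (p : ℝ≥0∞) [Fact (1 ≤ p)] (hp : p ≠ ⊤) :
    ∃ C : ℝ, 0 < C ∧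
      ∀ (X : Type u) [MeasurableSpace X] (μ : Measure X) [SigmaFinite μ]
        (T : ℕ → Lp ℝ p μ →L[ℝ] Lp ℝ p μ) (A : ℝ), 0 < A →
        (∀ (I : Finset ℕ) (ε : ℕ → ℝ), (∀ k, ε k = 1 ∨ ε k = -1) →
          ‖∑ k ∈ I, ε k • T k‖ ≤ A) →
        ∀ f : Lp ℝ p μ,
          eLpNorm (fun x => Real.sqrt (∑' k, ((T k f : X → ℝ) x) ^ 2)) p μ ≤
            ENNReal.ofReal (C * A) * eLpNorm (f : X → ℝ) p μ :=
  square_function_estimate_of_uniform_signed_sums_general p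
end

section
/- Let δ_t be dilations on ℝ^n with positive exponents, and let η : ℝ^n → [0,∞) be a continuous function whose support is a compact subset of ℝ^n∖{0}, such that ⋃_{t>0} δ_t({η ≠ 0}) = ℝ^n∖{0}. Then there exists a > 0 such that already the dyadic family covers: ⋃_{j∈ℤ} δ_{2^{a j}}({η ≠ 0}) = ℝ^n∖{0}. -/
/-!
Work in logarithmic time `s = log₂ t`, where the dilations form a continuous flow `ϕ` of `ℝ`.
The set of pairs `(s, x)` with `ϕ s x ∈ {η ≠ 0}` is open, so by compactness of `tsupport η`
there is one `ε > 0` such that every point of the support enters `{η ≠ 0}` during a whole time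
window of length `2ε`. Every orbit meeting `{η ≠ 0}` passes through the support, hence has such a
window, and the window contains a multiple of `a = ε`.
-/

open Set

theorem IsCompact.exists_uniform_window {τ α : Type*} [PseudoMetricSpace τ]
    [TopologicalSpace α] {K : Set α} (hK : IsCompact K) {f : τ → α → α}
    (hf : Continuous (Function.uncurry f)) {U : Set α} (hU : IsOpen U)
    (hKU : ∀ x ∈ K, ∃ s, f s x ∈ U) :
    ∃ ε > 0, ∀ x ∈ K, ∃ c, ∀ r ∈ Metric.ball c ε, f r x ∈ U := by
  refine hK.induction_on ⟨1, one_pos, by simp⟩ ?mono ?union ?nhds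
  case mono =>
    rintro S T hST ⟨ε, hε, hT⟩
    exact ⟨ε, hε, fun x hx => hT x (hST hx)⟩
  case union =>
    rintro S T ⟨ε₁, hε₁, hS⟩ ⟨ε₂, hε₂, hT⟩
    refine ⟨min ε₁ ε₂, lt_min hε₁ hε₂, ?_⟩
    rintro x (hx | hx)
    · obtain ⟨c, hc⟩ := hS x hx
      exact ⟨c, fun r hr => hc r (Metric.ball_subset_ball (min_le_left _ _) hr)⟩
    · obtain ⟨c, hc⟩ := hT x hx
      exact ⟨c, fun r hr => hc r (Metric.ball_subset_ball (min_le_right _ _) hr)⟩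
  case nhds =>
    intro x hx
    obtain ⟨s, hs⟩ := hKU x hx
    have hW : Function.uncurry f ⁻¹' U ∈ nhds (s, x) := (hU.preimage hf).mem_nhds hs
    obtain ⟨u, hu, v, hv, huv⟩ := mem_nhds_prod_iff.mp hW
    obtain ⟨ε, hε, hball⟩ := Metric.mem_nhds_iff.mp hu
    exact ⟨v, mem_nhdsWithin_of_mem_nhds hv, ε, hε,
      fun y hy => ⟨s, fun r hr => huv (mk_mem_prod (hball hr) hy)⟩⟩

theorem exists_int_mul_mem_ball {a : ℝ} (ha : 0 < a) (c : ℝ) :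
    ∃ k : ℤ, a * k ∈ Metric.ball c a := by
  obtain ⟨k, ⟨hk₁, hk₂⟩, -⟩ := existsUnique_zsmul_near_of_pos' ha c
  refine ⟨k, ?_⟩
  rw [zsmul_eq_mul] at hk₁ hk₂
  rw [Real.ball_eq_Ioo]
  constructor <;> linarith

namespace Flow

variable {α : Type*} [TopologicalSpace α] (ϕ : Flow ℝ α)

theorem exists_iUnion_int_mul_image_eq {U K : Set α} (hU : IsOpen U) (hK : IsCompact K)
    (hUK : U ⊆ K) (hKU : K ⊆ ⋃ s, ϕ s '' U) :
    ∃ a > 0, ⋃ k : ℤ, ϕ (a * k) '' U = ⋃ s, ϕ s '' U := by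
  have hK_enters : ∀ x ∈ K, ∃ s, ϕ s x ∈ U := by
    intro x hx
    obtain ⟨s, hs⟩ := mem_iUnion.mp (hKU hx)
    exact ⟨-s, by rwa [image_eq_preimage_symm] at hs⟩
  obtain ⟨a, ha, hwindow⟩ := hK.exists_uniform_window ϕ.cont' hU hK_enters
  refine ⟨a, ha, Subset.antisymm (iUnion_subset fun k => subset_iUnion (fun s => ϕ s '' U) _) ?_⟩
  refine iUnion_subset fun s => ?_
  rintro _ ⟨y, hyU, rfl⟩
  obtain ⟨c, hc⟩ := hwindow y (hUK hyU)
  obtain ⟨k, hk⟩ := exists_int_mul_mem_ball ha (s - c)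
  refine mem_iUnion.mpr ⟨k, ?_⟩
  -- `ϕ s y = ϕ (a k) (ϕ (s - a k) y)`, and `s - a k` lies in the window of `y`
  refine ⟨ϕ (s - a * k) y, hc _ ?_, by rw [← map_add, add_sub_cancel]⟩
  rw [Real.ball_eq_Ioo] at hk ⊢
  constructor <;> linarith [hk.1, hk.2]

end Flow

/-- `s` acts as the dilation `δ_{2^s}`. -/
noncomputable def dyadicDilationFlow {ι : Type*} (lam : ι → ℝ) : Flow ℝ (ι → ℝ) where
  toFun s x i := (2 : ℝ) ^ (s * lam i) * x i
  cont' := continuous_pi fun i => by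
    have h2 : Continuous fun s : ℝ => (2 : ℝ) ^ (s * lam i) :=
      continuous_const.rpow (continuous_id.mul continuous_const) fun _ => Or.inl two_ne_zero
    exact (h2.comp continuous_fst).mul ((continuous_apply i).comp continuous_snd)
  map_add' s t x := by
    funext i
    simp only [add_mul, Real.rpow_add two_pos]
    ring
  map_zero' x := by
    funext i
    simp

theorem two_rpow_rpow_mul_eq_dyadicDilationFlow {ι : Type*} (lam : ι → ℝ) (s : ℝ) (x : ι → ℝ)
    (i : ι) : ((2 : ℝ) ^ s) ^ lam i * x i = dyadicDilationFlow lam s x i := by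
  rw [← Real.rpow_mul zero_le_two]
  rfl

theorem biUnion_Ioi_dilation_image_eq {ι : Type*} (lam : ι → ℝ) (S : Set (ι → ℝ)) :
    ⋃ t ∈ Ioi (0 : ℝ), (fun x => fun i => t ^ lam i * x i) '' S =
      ⋃ s, dyadicDilationFlow lam s '' S := by
  have hIoi : Ioi (0 : ℝ) = range fun s : ℝ => (2 : ℝ) ^ s := by
    refine Subset.antisymm (fun t ht => ⟨Real.logb 2 t, ?_⟩) ?_
    · exact Real.rpow_logb two_pos (by norm_num) ht
    · exact range_subset_iff.mpr fun s => Real.rpow_pos_of_pos two_pos s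
  simp only [hIoi, biUnion_range, two_rpow_rpow_mul_eq_dyadicDilationFlow]

theorem dyadic_dilates_cover_general
    (n : ℕ) (lam : Fin n → ℝ)
    (η : (Fin n → ℝ) → ℝ) (hηc : Continuous η)
    (hηcpt : IsCompact (tsupport η)) (hη0 : (0 : Fin n → ℝ) ∉ tsupport η)
    (hcover :
      (⋃ t ∈ Ioi (0 : ℝ), (fun x => fun i => t ^ lam i * x i) '' {x | η x ≠ 0}) =
        {x : Fin n → ℝ | x ≠ 0}) :
    ∃ a : ℝ, 0 < a ∧
      (⋃ j : ℤ, (fun x => fun i => ((2 : ℝ) ^ (a * (j : ℝ))) ^ lam i * x i) ''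
          {x | η x ≠ 0}) =
        {x : Fin n → ℝ | x ≠ 0} := by
  rw [biUnion_Ioi_dilation_image_eq] at hcover
  have hU : IsOpen {x | η x ≠ 0} := isOpen_ne_fun hηc continuous_const
  have hsupp : tsupport η ⊆ ⋃ s, dyadicDilationFlow lam s '' {x | η x ≠ 0} := by
    rw [hcover]
    exact fun x hx => ne_of_mem_of_not_mem hx hη0
  obtain ⟨a, ha, hdyadic⟩ := (dyadicDilationFlow lam).exists_iUnion_int_mul_image_eq hU hηcpt
    (subset_tsupport η) hsupp
  refine ⟨a, ha, ?_⟩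
  simp only [two_rpow_rpow_mul_eq_dyadicDilationFlow]
  rw [hdyadic, hcover]

/-- If `η ≥ 0` is continuous with compact support contained in `ℝ^n ∖ {0}` and the dilates
`δ_t({η ≠ 0})`, `t > 0`, cover `ℝ^n ∖ {0}`, then for some `a > 0` already the dyadic dilates
`δ_{2^{aj}}({η ≠ 0})`, `j ∈ ℤ`, cover `ℝ^n ∖ {0}`. -/
theorem dyadic_dilates_cover
    (n : ℕ) (lam : Fin n → ℝ) (hlam : ∀ i, 0 < lam i)
    (η : (Fin n → ℝ) → ℝ) (hηc : Continuous η) (hηnn : ∀ x, 0 ≤ η x)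
    (hηcpt : IsCompact (tsupport η)) (hη0 : (0 : Fin n → ℝ) ∉ tsupport η)
    (hcover :
      (⋃ t ∈ Ioi (0 : ℝ), (fun x => fun i => t ^ lam i * x i) '' {x | η x ≠ 0}) =
        {x : Fin n → ℝ | x ≠ 0}) :
    ∃ a : ℝ, 0 < a ∧
      (⋃ j : ℤ, (fun x => fun i => ((2 : ℝ) ^ (a * (j : ℝ))) ^ lam i * x i) ''
          {x | η x ≠ 0}) =
        {x : Fin n → ℝ | x ≠ 0} :=
  dyadic_dilates_cover_general n lam η hηc hηcpt hη0 hcover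
end
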